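/- arXiv:2211.16371 — 6 statements merged into one kernel-verified Lean document; each statement's English description precedes it below -/
import Mathlib

section
/- Let p be a prime number, let C⁺ be a perfect valuation ring of characteristic p, and let E⁺ be a valuation ring extension of C⁺. Then for every f ∈ E⁺, the universal derivation satisfies d f = 0 in Ω¹_{E⁺/C⁺} if and only if f = g^p for some g ∈ E⁺. (This is the degree-0 case of the Cartier isomorphism for the extension C⁺ → E⁺: since C⁺ is perfect and E⁺ is a domain, the inverse Cartier map C⁻¹ : Ω⁰_{E⁺/C⁺} ⊗_{C⁺,φ} C⁺ → H⁰(Ω•_{E⁺/C⁺}) identifies with the map f ↦ f^p from E⁺ to the kernel of d, so its bijectivity is exactly this assertion.) -/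
/-!
If `f` is not a `p`-th power in `E`, it is not one in `K = Frac E` either, since a valuation ring
is integrally closed. In the field `K` of characteristic `p`, Zorn's lemma gives a subfield
`M ⊇ K^p` maximal among those not containing `f`, and then `K = M(f)`: for `y ∉ M`, maximality
forces `f ∈ M(y)`, and `M(f) ⊆ M(y)` both have degree `p` over `M`. The minimal polynomial
`X^p - f^p` of `f` has zero derivative, so `d/dX` descends to a derivation `D` of `K` with
`D f = 1`. As `C` is perfect, `D` kills the image of `C`, so `D` composed with `E → K` is a
`C`-derivation which does not vanish at `f`; hence `d f ≠ 0` in `Ω¹_{E/C}`.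
-/

open Polynomial
open scoped IntermediateField

namespace Derivation

variable {R A M : Type*} [CommRing R] [CommRing A] [Algebra R A]

theorem map_pow_char [AddCommGroup M] [Module A M] [Module R M] (p : ℕ) [CharP A p]
    (D : Derivation R A M) (a : A) : D (a ^ p) = 0 := by
  rw [leibniz_pow, ← Nat.cast_smul_eq_nsmul A, CharP.cast_eq_zero, zero_smul]

def extendScalars [AddCommGroup M] [Module A M] [Module R M] [IsScalarTower R A M]
    (D : Derivation ℤ A M) (hD : ∀ r : R, D (algebraMap R A r) = 0) : Derivation R A M :=
  Derivation.mk'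
    { toFun := D
      map_add' := D.map_add
      map_smul' := fun r a => by
        rw [Algebra.smul_def, D.leibniz, hD, smul_zero, add_zero, algebraMap_smul]
        rfl }
    D.leibniz

theorem exists_apply_eq_one_of_aeval_surjective {x : A}
    (hx : Function.Surjective (aeval x : R[X] →ₐ[R] A))
    (hker : ∀ Q : R[X], aeval x Q = 0 → aeval x (derivative Q) = 0) :
    ∃ D : Derivation R A A, D x = 1 :=
  ⟨liftOfSurjective (d := derivative') hx hker, by
    simpa using liftOfSurjective_apply (d := derivative') hx hker X⟩

end Derivation

theorem Subfield.exists_le_maximal_notMem {K : Type*} [Field K] {x : K} {M₀ : Subfield K}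
    (hx : x ∉ M₀) : ∃ M, M₀ ≤ M ∧ Maximal (fun M : Subfield K => x ∉ M) M :=
  zorn_le_nonempty₀ {M | x ∉ M} (fun c hcx hc M hM =>
    ⟨sSup c, fun hmem => by
      obtain ⟨N, hN, hxN⟩ := (Subfield.mem_sSup_of_directedOn ⟨M, hM⟩ hc.directedOn).1 hmem
      exact hcx hN hxN, fun _ => le_sSup⟩) M₀ hx

theorem IsIntegrallyClosed.exists_pow_eq_of_algebraMap_eq_pow {R K : Type*} [CommRing R]
    [CommRing K] [Algebra R K] [IsFractionRing R K] [IsIntegrallyClosed R] {n : ℕ} (hn : 0 < n)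
    {f : R} {g : K} (hg : g ^ n = algebraMap R K f) : ∃ y, f = y ^ n := by
  obtain ⟨y, rfl⟩ := exists_algebraMap_eq_of_isIntegral_pow hn (hg ▸ isIntegral_algebraMap)
  exact ⟨y, IsFractionRing.injective R K (by rw [map_pow, hg])⟩

section CharP

variable {p : ℕ} [hp : Fact p.Prime] {F K : Type*} [Field F] [Field K] [Algebra F K]
  {x : K} {a : F}

theorem isIntegral_of_algebraMap_eq_pow (ha : algebraMap F K a = x ^ p) : IsIntegral F x :=
  ⟨X ^ p - C a, monic_X_pow_sub_C a hp.out.ne_zero, by simp [ha]⟩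

variable [CharP K p]

theorem minpoly.eq_X_pow_sub_C_of_algebraMap_eq_pow (ha : algebraMap F K a = x ^ p)
    (hx : ∀ b : F, algebraMap F K b ≠ x) : minpoly F x = X ^ p - C a := by
  have hirr : Irreducible (X ^ p - C a) :=
    X_pow_sub_C_irreducible_of_prime hp.out fun b hb =>
      hx b (frobenius_inj K p (by simp only [frobenius_def, ← map_pow, hb, ha]))
  have hroot : Polynomial.aeval x (X ^ p - C a) = 0 := by simp [ha]
  exact (minpoly.eq_of_irreducible_of_monic hirr hroot
    (monic_X_pow_sub_C a hp.out.ne_zero)).symm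

namespace IntermediateField

theorem finrank_adjoin_simple_of_algebraMap_eq_pow (ha : algebraMap F K a = x ^ p)
    (hx : ∀ b : F, algebraMap F K b ≠ x) : Module.finrank F F⟮x⟯ = p := by
  rw [adjoin.finrank (isIntegral_of_algebraMap_eq_pow ha),
    minpoly.eq_X_pow_sub_C_of_algebraMap_eq_pow ha hx, natDegree_X_pow_sub_C]

theorem adjoin_simple_eq_top_of_maximal_notMem {M : Subfield K} (hpow : ∀ z : K, z ^ p ∈ M)
    {f : K}(hM : Maximal (fun N : Subfield K => f ∉ N) M) : M⟮f⟯ = ⊤ := by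
  have hdeg : ∀ y ∉ M, Module.finrank M M⟮y⟯ = p := fun y hy =>
    finrank_adjoin_simple_of_algebraMap_eq_pow (a := ⟨y ^ p, hpow y⟩) rfl
      fun b hb => hy (hb ▸ b.2)
  refine eq_top_iff.2 fun y _ => ?_
  by_cases hy : y ∈ M
  · exact algebraMap_mem _ (⟨y, hy⟩ : M)
  have hfy : f ∈ M⟮y⟯ := by
    by_contra hf
    refine hy (hM.2 (y := M⟮y⟯.toSubfield) hf (fun z hz => ?_)
      (mem_adjoin_simple_self M y))
    exact algebraMap_mem _ (⟨z, hz⟩ : M)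
  have : FiniteDimensional M M⟮y⟯ :=
    Module.finite_of_finrank_pos (by rw [hdeg y hy]; exact hp.out.pos)
  have hfy_eq := eq_of_le_of_finrank_eq (adjoin_simple_le_iff.2 hfy)
    (by rw [hdeg y hy, hdeg f hM.1])
  exact hfy_eq ▸ mem_adjoin_simple_self M y

end IntermediateField

theorem aeval_derivative_eq_zero_of_algebraMap_eq_pow (ha : algebraMap F K a = x ^ p)
    (hx : ∀ b : F, algebraMap F K b ≠ x) {Q : F[X]} (hQ : aeval x Q = 0) :
    aeval x (derivative Q) = 0 := by
  obtain ⟨S, rfl⟩ := minpoly.dvd F x hQ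
  rw [minpoly.eq_X_pow_sub_C_of_algebraMap_eq_pow ha hx]
  simp [derivative_mul, derivative_X_pow, ha]

theorem exists_derivation_apply_eq_one_of_forall_pow_ne {f : K} (hf : ∀ g : K, g ^ p ≠ f) :
    ∃ D : Derivation ℤ K K, D f = 1 := by
  obtain ⟨M, hpow, hM⟩ := Subfield.exists_le_maximal_notMem (M₀ := (frobenius K p).fieldRange)
    (x := f) fun ⟨g, hg⟩ => hf g hg
  have hfp : algebraMap M K ⟨f ^ p, hpow ⟨f, rfl⟩⟩ = f ^ p := rfl
  have hfM : ∀ b : M, algebraMap M K b ≠ f := fun b (hb : (b : K) = f) => hM.1 (hb ▸ b.2)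
  have hsurj : Function.Surjective (aeval f : M[X] →ₐ[M] K) := fun y => by
    rw [← AlgHom.mem_range, ← Algebra.adjoin_singleton_eq_range_aeval,
      ← IntermediateField.adjoin_simple_toSubalgebra_of_isAlgebraic
        (isIntegral_of_algebraMap_eq_pow hfp).isAlgebraic,
      IntermediateField.adjoin_simple_eq_top_of_maximal_notMem (fun z => hpow ⟨z, rfl⟩) hM]
    trivial
  obtain ⟨D, hD⟩ := Derivation.exists_apply_eq_one_of_aeval_surjective hsurj fun _ =>
    aeval_derivative_eq_zero_of_algebraMap_eq_pow hfp hfM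
  exact ⟨D.restrictScalars ℤ, hD⟩

end CharP

theorem exists_derivation_apply_eq_one_of_not_exists_pow {p : ℕ} [hp : Fact p.Prime]
    {C E K : Type*} [CommRing C] [CommRing E] [Field K] [Algebra C E] [Algebra E K] [Algebra C K]
    [IsScalarTower C E K] [IsFractionRing E K] [IsIntegrallyClosed E] [CharP E p]
    (hperf : Function.Surjective fun c : C => c ^ p) {f : E} (hf : ¬∃ g : E, f = g ^ p) :
    ∃ δ : Derivation C E K, δ f = 1 := by
  have : CharP K p := IsFractionRing.charP_of_isFractionRing E p
  obtain ⟨D, hD⟩ := exists_derivation_apply_eq_one_of_forall_pow_ne (p := p)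
    (f := algebraMap E K f) fun g hg =>
      hf (IsIntegrallyClosed.exists_pow_eq_of_algebraMap_eq_pow hp.out.pos hg)
  refine ⟨(D.compAlgebraMap E).extendScalars fun c => ?_, hD⟩
  obtain ⟨c, rfl⟩ := hperf c
  simp only [map_pow, Derivation.map_pow_char]

theorem cartier_iso_degree_zero_char_p_valuation_rings_general
    (p : ℕ) (hp : p.Prime) (C E : Type) [CommRing C]
    [CommRing E] [IsDomain E] [ValuationRing E]
    [CharP C p] (hperf : Function.Bijective (fun x : C => x ^ p))
    [Algebra C E]
    (f : E) :
    KaehlerDifferential.D C E f = 0 ↔ ∃ g : E, f = g ^ p := by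
  have : Fact p.Prime := ⟨hp⟩
  have : CharP E p := (CharP.charP_iff_prime_eq_zero hp).2 <| by
    rw [← map_natCast (algebraMap C E), CharP.cast_eq_zero, map_zero]
  refine ⟨fun hdf => ?_, fun ⟨g, hg⟩ => hg ▸ Derivation.map_pow_char p _ g⟩
  by_contra hf
  obtain ⟨δ, hδ⟩ :=
    exists_derivation_apply_eq_one_of_not_exists_pow (K := FractionRing E) hperf.2 hf
  rw [← δ.liftKaehlerDifferential_comp_D, hdf, map_zero] at hδ
  exact zero_ne_one hδ

/-- **Theorem 3.3(2), degree 0** (Gabber): if `C` is a perfect valuation ring of characteristic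
`p` and `E` is a valuation ring extension of `C`, then for `f : E` the universal derivation
satisfies `d f = 0` in `Ω¹_{E/C}` if and only if `f` is a `p`-th power in `E`. -/
theorem cartier_iso_degree_zero_char_p_valuation_rings
    (p : ℕ) (hp : p.Prime) (C E : Type) [CommRing C] [IsDomain C] [ValuationRing C]
    [CommRing E] [IsDomain E] [ValuationRing E]
    [CharP C p] (hperf : Function.Bijective (fun x : C => x ^ p))
    [Algebra C E] (hinj : Function.Injective (algebraMap C E))
    (f : E) :
    KaehlerDifferential.D C E f = 0 ↔ ∃ g : E, f = g ^ p :=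
  cartier_iso_degree_zero_char_p_valuation_rings_general p hp C E hperf f
end

section
/- Let p be a prime number, let E⁺ be a valuation ring in which p is nonzero, and let M be an E⁺-module. If M is p-torsionfree, then the quotient M/pM is a flat module over the quotient ring E⁺/pE⁺. -/
/-! By the equational criterion it suffices to make a relation `∑ f̄ᵢ x̄ᵢ = 0` in `M/πM` trivial.
Over a Bézout ring the ideal `(π, f₁, …, fₙ)` is generated by some `d`; write `π = d q` and
`fᵢ = d gᵢ`. Lifting the relation to `∑ fᵢ xᵢ = π m` gives `d (∑ gᵢ xᵢ - q m) = 0`, so `π` also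
kills `∑ gᵢ xᵢ - q m`, and `π`-torsionfreeness gives `∑ gᵢ xᵢ = q m`. Modulo `π`, `d` lies in the
ideal of the `fᵢ`, divides each of them and kills `q`, which is all a trivialization needs.
Valuation rings are Bézout. -/

theorem Module.isTrivialRelation_of_eq_mul_of_sum_smul_eq {R N : Type*} [CommRing R]
    [AddCommGroup N] [Module R N] {ι : Type*} [Fintype ι] {f : ι → R} {x : ι → N} {d c : R}
    {z : N} (g : ι → R)
    (hd : d ∈ Ideal.span (Set.range f)) (hfg : ∀ i, f i = d * g i) (hdc : d * c = 0)
    (hgx : ∑ i, g i • x i = c • z) : IsTrivialRelation f x := by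
  classical
  obtain ⟨e, he⟩ := Ideal.mem_span_range_iff_exists_fun.mp hd
  rw [isTrivialRelation_iff_vanishesTrivially]
  -- With `d = ∑ eᵢ fᵢ`, `xᵢ = (eᵢ c) • z + ∑ⱼ (δᵢⱼ - eᵢ gⱼ) • xⱼ` and every column kills `f`.
  refine .of_fintype (κ := Option ι)
    (fun i j => j.elim (e i * c) fun j => (if i = j then 1 else 0) - e i * g j)
    (fun j => j.elim z x) (fun i => ?_) (fun j => ?_)
  · simp only [Fintype.sum_option, Option.elim, sub_smul, ite_smul, one_smul, zero_smul,
      Finset.sum_sub_distrib, Finset.sum_ite_eq, Finset.mem_univ, if_true, mul_smul,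
      ← Finset.smul_sum, hgx]
    abel
  · cases j with
    | none =>
      simp only [Option.elim, smul_eq_mul, mul_right_comm (e _) c, ← Finset.sum_mul, he, hdc]
    | some j =>
      simp only [Option.elim, smul_eq_mul, sub_mul, ite_mul, one_mul, zero_mul,
        Finset.sum_sub_distrib, Finset.sum_ite_eq', Finset.mem_univ, if_true,
        mul_right_comm (e _) (g j), ← Finset.sum_mul, he]
      rw [hfg j, sub_self]

theorem IsBezout.exists_dvd_mem_span_insert_range {R : Type*} [CommRing R] [IsBezout R]
    {ι : Type*} [Finite ι] (π : R) (f : ι → R) :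
    ∃ d, d ∣ π ∧ (∀ i, d ∣ f i) ∧ d ∈ Ideal.span (insert π (Set.range f)) := by
  obtain ⟨d, hJ⟩ := IsBezout.isPrincipal_of_FG (Ideal.span (insert π (Set.range f)))
    (Submodule.fg_span ((Set.finite_range f).insert π))
  have hdvd : ∀ a ∈ insert π (Set.range f), d ∣ a := fun a ha => by
    rw [← Ideal.mem_span_singleton, Ideal.span, ← hJ]
    exact Ideal.subset_span ha
  refine ⟨d, hdvd π (Set.mem_insert _ _), fun i => hdvd _ (Set.mem_insert_of_mem _ ⟨i, rfl⟩), ?_⟩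
  rw [hJ]
  exact Submodule.mem_span_singleton_self d

theorem Module.Flat.quotient_smul_top_of_injective_smul {R : Type*} [CommRing R] [IsBezout R]
    (π : R) {M : Type*} [AddCommGroup M] [Module R M] (hπ : Function.Injective fun m : M => π • m) :
    Module.Flat (R ⧸ Ideal.span {π}) (M ⧸ (Ideal.span {π} • ⊤ : Submodule R M)) := by
  refine of_forall_isTrivialRelation fun {n f' x'} hrel => ?_
  obtain ⟨f, rfl⟩ := Ideal.Quotient.mk_surjective.comp_left f'
  obtain ⟨x, rfl⟩ := (Submodule.Quotient.mk_surjective _).comp_left x'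
  obtain ⟨d, ⟨q, hq⟩, hdf, hd⟩ := IsBezout.exists_dvd_mem_span_insert_range π f
  choose g hg using hdf
  obtain ⟨m, -, hm⟩ : ∃ m ∈ (⊤ : Submodule R M), π • m = ∑ i, f i • x i := by
    rw [← Submodule.mem_smul_pointwise_iff_exists, ← Submodule.ideal_span_singleton_smul,
      ← Submodule.Quotient.mk_eq_zero, ← Submodule.mkQ_apply, map_sum]
    exact hrel
  have hgx : ∑ i, g i • x i = q • m := hπ <| by
    calc π • ∑ i, g i • x i = q • ∑ i, f i • x i := by
          rw [hq, mul_comm, mul_smul, Finset.smul_sum]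
          simp only [smul_smul, ← hg]
      _ = π • q • m := by rw [← hm, smul_comm]
  refine isTrivialRelation_of_eq_mul_of_sum_smul_eq (d := Ideal.Quotient.mk _ d)
    (c := Ideal.Quotient.mk _ q) (z := Submodule.Quotient.mk m) (Ideal.Quotient.mk _ ∘ g)
    ?_ (fun i => by simp [hg i]) ?_ ?_
  · have hd' := Ideal.mem_map_of_mem (Ideal.Quotient.mk (Ideal.span {π})) hd
    rwa [Ideal.map_span, Set.image_insert_eq, Ideal.Quotient.mk_singleton_self,
      Ideal.span_insert_zero, ← Set.range_comp] at hd'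
  · rw [← map_mul, ← hq, Ideal.Quotient.mk_singleton_self]
  · simp only [Function.comp, Module.Quotient.mk_smul_mk, ← hgx]
    exact (map_sum (Submodule.mkQ _) _ _).symm

theorem mod_p_flat_of_p_torsionfree_general
    (p : ℕ) (E : Type) [CommRing E] [IsDomain E] [ValuationRing E]
    (M : Type) [AddCommGroup M] [Module E M]
    (htf : Function.Injective fun m : M => (p : E) • m) :
    Module.Flat (E ⧸ Ideal.span {(p : E)})
      (M ⧸ ((Ideal.span {(p : E)}) • ⊤ : Submodule E M)) :=
  Module.Flat.quotient_smul_top_of_injective_smul (p : E) htf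

/-- **Lemma 4.7**: if `E` is a valuation ring in which `p` is nonzero and `M` is a
`p`-torsionfree `E`-module, then `M/pM` is a flat `E/pE`-module. -/
theorem mod_p_flat_of_p_torsionfree
    (p : ℕ) (hp : p.Prime) (E : Type) [CommRing E] [IsDomain E] [ValuationRing E]
    (hpne : (p : E) ≠ 0)
    (M : Type) [AddCommGroup M] [Module E M]
    (htf : Function.Injective fun m : M => (p : E) • m) :
    Module.Flat (E ⧸ Ideal.span {(p : E)})
      (M ⧸ ((Ideal.span {(p : E)}) • ⊤ : Submodule E M)) :=
  mod_p_flat_of_p_torsionfree_general p E M htf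
end

section
/- Let p be a prime number and let E⁺ be a valuation ring in which p is not a unit. Then the ideal J := ⋂_{n ≥ 0} pⁿE⁺ is a prime ideal of E⁺, and the quotient ring E⁺/J (the p-adically separated quotient of E⁺) is again a valuation ring, i.e., an integral domain in which for any two elements one divides the other. -/
/-- From the proof of **Lemma 4.7**: if `E` is a valuation ring in which `p` is not a unit,
then `J = ⋂ₙ pⁿE` is a prime ideal and the `p`-adically separated quotient `E/J` is again
a valuation ring: an integral domain in which any two elements are comparable under
divisibility. -/
theorem p_adically_separated_quotient_is_valuation_ring
    (p : ℕ) (hp : p.Prime) (E : Type) [CommRing E] [IsDomain E] [ValuationRing E]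
    (hpu : ¬ IsUnit (p : E)) :
    (⨅ n : ℕ, Ideal.span {(p : E) ^ n}).IsPrime ∧
      IsDomain (E ⧸ (⨅ n : ℕ, Ideal.span {(p : E) ^ n})) ∧
      ∀ x y : E ⧸ (⨅ n : ℕ, Ideal.span {(p : E) ^ n}), x ∣ y ∨ y ∣ x := by
  set J := ⨅ n : ℕ, Ideal.span {(p : E) ^ n} with hJ
  have hJmem : ∀ x : E, x ∈ J ↔ ∀ n : ℕ, (p : E) ^ n ∣ x := by
    intro x
    simp [hJ, Ideal.mem_iInf, Ideal.mem_span_singleton]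
  have hprime : J.IsPrime := by
    by_cases hp0 : (p : E) = 0
    · have hbot : J = ⊥ := by
        refine le_antisymm ?_ bot_le
        intro x hx
        have := (hJmem x).mp hx 1
        simpa [hp0] using this
      rw [hbot]
      exact Ideal.bot_prime
    · constructor
      · intro h
        have : (1 : E) ∈ J := by rw [h]; trivial
        have := (hJmem 1).mp this 1
        exact hpu (isUnit_of_dvd_one (by simpa using this))
      · intro a b hab
        by_contra h
        push_neg at h
        obtain ⟨ha, hb⟩ := h
        rw [hJmem] at ha hb
        push_neg at ha hb
        obtain ⟨m, hm⟩ := ha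
        obtain ⟨n, hn⟩ := hb
        have ham : a ∣ (p : E) ^ m := (ValuationRing.dvd_total _ _).resolve_left hm
        have hbn : b ∣ (p : E) ^ n := (ValuationRing.dvd_total _ _).resolve_left hn
        have h1 : (p : E) ^ (m + n + 1) ∣ (p : E) ^ (m + n) := by
          refine dvd_trans ((hJmem _).mp hab (m + n + 1)) ?_
          rw [pow_add]
          exact mul_dvd_mul ham hbn
        have h2 : (p : E) ^ (m + n) * (p : E) ∣ (p : E) ^ (m + n) * 1 := by
          rw [mul_one, ← pow_succ]
          exact h1
        have := (mul_dvd_mul_iff_left (pow_ne_zero (m + n) hp0)).mp h2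
        exact hpu (isUnit_of_dvd_one this)
  refine ⟨hprime, (Ideal.Quotient.isDomain_iff_prime J).mpr hprime, ?_⟩
  intro x y
  obtain ⟨a, rfl⟩ := Ideal.Quotient.mk_surjective x
  obtain ⟨b, rfl⟩ := Ideal.Quotient.mk_surjective y
  rcases ValuationRing.dvd_total a b with h | h
  · exact Or.inl (map_dvd (Ideal.Quotient.mk J) h)
  · exact Or.inr (map_dvd (Ideal.Quotient.mk J) h)
end

section
/- Let p be a prime number and let E⁺ be a valuation ring in which p is nonzero and which is p-adically separated, i.e., ⋂_{n ≥ 0} pⁿE⁺ = 0. Then every p-torsionfree E⁺-module is torsionfree (multiplication by any nonzero element of E⁺ is injective on it), and hence flat over E⁺. -/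
/-!
A nonzero `c` in a valuation ring that is `a`-adically separated cannot be divisible by every
power of `a`, so by comparability `c ∣ a ^ n` for some `n`. Hence `c` acts injectively on any
module on which `a` does. Valuation rings are Bézout, and over a Bézout domain torsion-free
modules are flat.
-/

theorem Module.Flat.of_isTorsionFree_of_isBezout {R M : Type*} [CommRing R] [IsDomain R]
    [IsBezout R] [AddCommGroup M] [Module R M] [Module.IsTorsionFree R M] : Module.Flat R M :=
  flat_iff_torsion_eq_bot_of_isBezout.mpr <|
    Submodule.isTorsionFree_iff_torsion_eq_bot.mp inferInstance

namespace ValuationRing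

variable {R M : Type*} [CommRing R] [IsDomain R] [ValuationRing R] [AddCommGroup M] [Module R M]
  {a : R}

theorem exists_dvd_pow_of_iInf_span_pow_eq_bot (hsep : ⨅ n : ℕ, Ideal.span {a ^ n} = ⊥)
    {c : R} (hc : c ≠ 0) : ∃ n : ℕ, c ∣ a ^ n := by
  have hnot : ∃ n : ℕ, ¬ a ^ n ∣ c := by
    by_contra! h
    have hmem : c ∈ ⨅ n : ℕ, Ideal.span {a ^ n} :=
      Ideal.mem_iInf.mpr fun n => Ideal.mem_span_singleton.mpr (h n)
    exact hc (by simpa [hsep] using hmem)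
  obtain ⟨n, hn⟩ := hnot
  exact ⟨n, (dvd_total c (a ^ n)).resolve_right hn⟩

theorem isSMulRegular_of_iInf_span_pow_eq_bot (hsep : ⨅ n : ℕ, Ideal.span {a ^ n} = ⊥)
    (ha : IsSMulRegular M a) {c : R} (hc : c ≠ 0) : IsSMulRegular M c := by
  obtain ⟨n, d, hd⟩ := exists_dvd_pow_of_iInf_span_pow_eq_bot hsep hc
  have hdc : IsSMulRegular M (d * c) := by
    rw [mul_comm, ← hd]
    exact ha.pow n
  exact hdc.of_mul

theorem isTorsionFree_of_iInf_span_pow_eq_bot (hsep : ⨅ n : ℕ, Ideal.span {a ^ n} = ⊥)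
    (ha : IsSMulRegular M a) : Module.IsTorsionFree R M :=
  ⟨fun _ hc => isSMulRegular_of_iInf_span_pow_eq_bot hsep ha hc.ne_zero⟩

end ValuationRing

theorem torsionfree_and_flat_of_p_torsionfree_of_separated_general
    (p : ℕ) (E : Type) [CommRing E] [IsDomain E] [ValuationRing E]
    (hsep : (⨅ n : ℕ, Ideal.span {(p : E) ^ n}) = ⊥)
    (M : Type) [AddCommGroup M] [Module E M]
    (htf : Function.Injective fun m : M => (p : E) • m) :
    (∀ c : E, c ≠ 0 → Function.Injective fun m : M => c • m) ∧ Module.Flat E M :=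
  have := ValuationRing.isTorsionFree_of_iInf_span_pow_eq_bot hsep htf
  ⟨fun _ hc => ValuationRing.isSMulRegular_of_iInf_span_pow_eq_bot hsep htf hc,
    Module.Flat.of_isTorsionFree_of_isBezout⟩

/-- From the proof of **Lemma 4.7**: over a `p`-adically separated valuation ring `E`
in which `p` is nonzero, every `p`-torsionfree module is torsionfree, and hence flat. -/
theorem torsionfree_and_flat_of_p_torsionfree_of_separated
    (p : ℕ) (hp : p.Prime) (E : Type) [CommRing E] [IsDomain E] [ValuationRing E]
    (hpne : (p : E) ≠ 0)
    (hsep : (⨅ n : ℕ, Ideal.span {(p : E) ^ n}) = ⊥)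
    (M : Type) [AddCommGroup M] [Module E M]
    (htf : Function.Injective fun m : M => (p : E) • m) :
    (∀ c : E, c ≠ 0 → Function.Injective fun m : M => c • m) ∧ Module.Flat E M :=
  torsionfree_and_flat_of_p_torsionfree_of_separated_general p E hsep M htf
end

section
/- Let R be a commutative ring and let M be an R-module which is the union of an increasing sequence (P_n)_{n ∈ ℕ} of submodules, each of which is projective as an R-module. Then M has projective dimension at most 1: there is a short exact sequence 0 → ⊕_{n∈ℕ} P_n → ⊕_{n∈ℕ} P_n → M → 0, where the first map sends (x_n)_n to (x_n − ι_{n−1}(x_{n−1}))_n (with ι_{n−1} the inclusion P_{n−1} ⊆ P_n and the convention x_{−1} = 0); consequently Ext^i_R(M, Q) = 0 for every R-module Q and every integer i ≥ 2. -/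
/-!
Modulo the image of the shift `x ↦ x − ι(x)`, every element of `⨁ₙ Pₙ` is congruent to one
concentrated in a single degree, where the sum map is just the inclusion `Pₙ ⊆ M`; this gives
exactness in the middle, and injectivity of the shift follows degree by degree from the bottom.
The resulting short exact sequence is a projective resolution of `M` of length one, so
`Ext^i(M, -)` vanishes for `i ≥ 2`.
-/

open CategoryTheory
open scoped DirectSum

/-- The first map `(xₙ)ₙ ↦ (xₙ − ι(xₙ₋₁))ₙ` of the Milnor exact sequence associated to an
increasing sequence of submodules `P : ℕ → Submodule R M` (with the convention `x₋₁ = 0`):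
on the generator `x` in the `n`-th summand it takes the value `x − ι(x)` with `x` placed in
degree `n` and `ι(x)` in degree `n + 1`. -/
noncomputable def milnorShift (R M : Type) [CommRing R] [AddCommGroup M] [Module R M]
    (P : ℕ → Submodule R M) (hP : Monotone P) :
    (⨁ n : ℕ, ↥(P n)) →ₗ[R] (⨁ n : ℕ, ↥(P n)) :=
  DirectSum.toModule R ℕ _ fun n =>
    DirectSum.lof R ℕ (fun k => ↥(P k)) n -
      (DirectSum.lof R ℕ (fun k => ↥(P k)) (n + 1)).comp
        (Submodule.inclusion (hP (Nat.le_succ n)))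

/-- The second map of the Milnor exact sequence: the sum of the inclusions `P n ⊆ M`. -/
noncomputable def milnorSum (R M : Type) [CommRing R] [AddCommGroup M] [Module R M]
    (P : ℕ → Submodule R M) :
    (⨁ n : ℕ, ↥(P n)) →ₗ[R] M :=
  DirectSum.toModule R ℕ M fun n => (P n).subtype

open Limits ZeroObject

universe v u

namespace CategoryTheory

variable {C : Type u} [Category.{v} C] [Abelian C]

namespace ShortComplex

variable (S : ShortComplex C)

noncomputable def resolutionComplex : ChainComplex C ℕ :=
  ChainComplex.of (fun | 0 => S.X₂ | 1 => S.X₁ | _ + 2 => 0)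
    (fun | 0 => S.f | _ + 1 => 0) (fun | 0 => zero_comp | _ + 1 => zero_comp)

lemma resolutionComplex_d_one_zero : S.resolutionComplex.d 1 0 = S.f := by
  simp [resolutionComplex, ChainComplex.of.d]

lemma resolutionComplex_d_add_two (n : ℕ) : S.resolutionComplex.d (n + 2) (n + 1) = 0 := by
  simp [resolutionComplex, ChainComplex.of.d]; rfl

variable {S}

noncomputable def ShortExact.projectiveResolution (hS : S.ShortExact)
    [Projective S.X₁] [Projective S.X₂] : ProjectiveResolution S.X₃ where
  complex := S.resolutionComplex
  projective
    | 0 => inferInstanceAs (Projective S.X₂)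
    | 1 => inferInstanceAs (Projective S.X₁)
    | _ + 2 => (isZero_zero C).projective
  π := (ChainComplex.toSingle₀Equiv _ _).symm
    ⟨S.g, by rw [resolutionComplex_d_one_zero]; exact S.zero⟩
  quasiIso := ⟨fun
    | 0 => by
      rw [ChainComplex.quasiIsoAt₀_iff, quasiIso_iff_of_zeros' _ rfl rfl rfl]
      refine (exact_and_epi_g_iff_of_iso ?_).1 ⟨hS.exact, hS.epi_g⟩
      exact isoMk (Iso.refl _) (Iso.refl _) (Iso.refl _)
        ((Category.id_comp _).trans (S.resolutionComplex_d_one_zero.trans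
          (Category.comp_id _).symm))
        ((Category.id_comp _).trans ((ChainComplex.toSingle₀Equiv_symm_apply_f_zero _ _).trans
          (Category.comp_id _).symm))
    | n + 1 => by
      rw [quasiIsoAt_iff_exactAt' _ _ (ChainComplex.exactAt_succ_single_obj _ _),
        HomologicalComplex.exactAt_iff' _ (n + 2) (n + 1) n (by simp) (by simp)]
      match n with
      | 0 =>
        rw [exact_iff_mono _ (S.resolutionComplex_d_add_two 0)]
        exact (show Mono (S.resolutionComplex.d 1 0) from
          S.resolutionComplex_d_one_zero ▸ hS.mono_f)
      | _ + 1 => exact exact_of_isZero_X₂ _ (isZero_zero C)⟩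

end ShortComplex

variable (R : Type*) [Ring R] [Linear R C] [EnoughProjectives C]

lemma ProjectiveResolution.isZero_ext_of_isZero_X {X : C} (P : ProjectiveResolution X) {n : ℕ}
    (hn : IsZero (P.complex.X n)) (Y : C) :
    IsZero (((Ext R C n).obj (Opposite.op X)).obj Y) := by
  refine IsZero.of_iso ?_ (P.isoExt n Y)
  rw [← HomologicalComplex.exactAt_iff_isZero_homology, HomologicalComplex.exactAt_iff]
  refine ShortComplex.exact_of_isZero_X₂ _ ?_
  have : Subsingleton (P.complex.X n ⟶ Y) := ⟨hn.eq_of_src⟩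
  exact ModuleCat.isZero_of_subsingleton (ModuleCat.of R (P.complex.X n ⟶ Y))

lemma ShortComplex.ShortExact.isZero_ext_add_two {S : ShortComplex C} (hS : S.ShortExact)
    [Projective S.X₁] [Projective S.X₂] (Y : C) (n : ℕ) :
    IsZero (((Ext R C (n + 2)).obj (Opposite.op S.X₃)).obj Y) :=
  hS.projectiveResolution.isZero_ext_of_isZero_X R (n := n + 2) (isZero_zero C) Y

end CategoryTheory

section Milnor

variable {R M : Type} [CommRing R] [AddCommGroup M] [Module R M] {P : ℕ → Submodule R M}

lemma milnorSum_of (n : ℕ) (y : P n) : milnorSum R M P (DirectSum.of (fun k => P k) n y) = y :=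
  DirectSum.coeLinearMap_of _ n y

lemma range_milnorSum : LinearMap.range (milnorSum R M P) = ⨆ n, P n :=
  DirectSum.range_coeLinearMap

variable (hP : Monotone P)
include hP

lemma milnorShift_of (n : ℕ) (y : P n) :
    milnorShift R M P hP (DirectSum.of (fun k => P k) n y) =
      DirectSum.of (fun k => P k) n y -
        DirectSum.of (fun k => P k) (n + 1) (Submodule.inclusion (hP n.le_succ) y) := by
  simp [milnorShift, ← DirectSum.lof_eq_of R, DirectSum.toModule_lof]

lemma milnorShift_apply_zero (x : ⨁ n, P n) : milnorShift R M P hP x 0 = x 0 := by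
  induction x using DirectSum.induction_on with
  | zero => simp
  | of n y => simp [milnorShift_of, DirectSum.of_apply]
  | add a b ha hb => simp [ha, hb]

lemma milnorShift_apply_succ (x : ⨁ n, P n) (k : ℕ) :
    milnorShift R M P hP x (k + 1) = x (k + 1) - Submodule.inclusion (hP k.le_succ) (x k) := by
  induction x using DirectSum.induction_on with
  | zero => simp
  | of n y =>
    rcases eq_or_ne n k with rfl | h
    · simp [milnorShift_of, DirectSum.of_apply]
    · simp [milnorShift_of, DirectSum.of_apply, h]
  | add a b ha hb => simp only [map_add, DirectSum.add_apply, ha, hb]; abel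

lemma milnorShift_injective : Function.Injective (milnorShift R M P hP) := by
  refine (injective_iff_map_eq_zero _).2 fun x hx => DFinsupp.ext fun k => ?_
  induction k with
  | zero => simpa [hx] using (milnorShift_apply_zero hP x).symm
  | succ k ih => simpa [hx, ih] using (milnorShift_apply_succ hP x k).symm

lemma milnorSum_comp_milnorShift : milnorSum R M P ∘ₗ milnorShift R M P hP = 0 := by
  ext n y
  simp [DirectSum.lof_eq_of, milnorShift_of, milnorSum_of]

lemma of_sub_of_inclusion_mem_range_milnorShift {n m : ℕ} (h : n ≤ m) (y : P n) :
    DirectSum.of (fun k => P k) n y - DirectSum.of (fun k => P k) m (Submodule.inclusion (hP h) y)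
      ∈ LinearMap.range (milnorShift R M P hP) := by
  induction m, h using Nat.le_induction with
  | base => exact sub_self (DirectSum.of (fun k => P k) n y) ▸ zero_mem _
  | succ m hnm ih =>
    have hstep : milnorShift R M P hP (DirectSum.of _ m (Submodule.inclusion (hP hnm) y)) =
        DirectSum.of _ m (Submodule.inclusion (hP hnm) y) -
          DirectSum.of _ (m + 1) (Submodule.inclusion (hP (hnm.trans m.le_succ)) y) :=
      milnorShift_of hP m _
    convert add_mem ih ⟨_, hstep⟩ using 1
    abel

lemma exists_sub_of_mem_range_milnorShift (x : ⨁ n, P n) :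
    ∃ n, ∃ y : P n,
      x - DirectSum.of (fun k => P k) n y ∈ LinearMap.range (milnorShift R M P hP) := by
  induction x using DirectSum.induction_on with
  | zero => exact ⟨0, 0, by simp⟩
  | of n y => exact ⟨n, y, by simp⟩
  | add a b ha hb =>
    obtain ⟨n, y, hy⟩ := ha
    obtain ⟨m, z, hz⟩ := hb
    have hn := of_sub_of_inclusion_mem_range_milnorShift hP (le_max_left n m) y
    have hm := of_sub_of_inclusion_mem_range_milnorShift hP (le_max_right n m) z
    refine ⟨max n m, Submodule.inclusion (hP (le_max_left n m)) y +
      Submodule.inclusion (hP (le_max_right n m)) z, ?_⟩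
    convert add_mem (add_mem hy hn) (add_mem hz hm) using 1
    rw [map_add]
    abel

lemma range_milnorShift :
    LinearMap.range (milnorShift R M P hP) = LinearMap.ker (milnorSum R M P) := by
  have hle := LinearMap.range_le_ker_iff.2 (milnorSum_comp_milnorShift hP)
  refine le_antisymm hle fun x hx => ?_
  obtain ⟨n, y, hy⟩ := exists_sub_of_mem_range_milnorShift hP x
  have hy0 : y = 0 := by
    have := LinearMap.mem_ker.1 (hle hy)
    rw [map_sub, LinearMap.mem_ker.1 hx, milnorSum_of, zero_sub, neg_eq_zero] at this
    exact Subtype.ext this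
  simpa [hy0] using hy

end Milnor

/-- A module which is the union of an increasing sequence of projective submodules has
projective dimension at most `1`: there is a short exact sequence
`0 → ⊕ₙ Pₙ → ⊕ₙ Pₙ → M → 0` whose first map sends `(xₙ)ₙ` to `(xₙ − ι(xₙ₋₁))ₙ`, and
consequently `Ext^i_R(M, Q) = 0` for every module `Q` and every `i ≥ 2`. -/
theorem projective_dimension_le_one_of_increasing_union_of_projectives
    (R M : Type) [CommRing R] [AddCommGroup M] [Module R M]
    (P : ℕ → Submodule R M) (hP : Monotone P)
    (hproj : ∀ n, Module.Projective R ↥(P n))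
    (hunion : (⨆ n, P n) = ⊤) :
    Function.Injective (milnorShift R M P hP) ∧
    LinearMap.range (milnorShift R M P hP) = LinearMap.ker (milnorSum R M P) ∧
    Function.Surjective (milnorSum R M P) ∧
    ∀ (Q : ModuleCat R) (i : ℕ), 2 ≤ i →
      Limits.IsZero (((Ext R (ModuleCat R) i).obj
        (Opposite.op (ModuleCat.of R M))).obj Q) := by
  have hsurj : Function.Surjective (milnorSum R M P) :=
    LinearMap.range_eq_top.1 (range_milnorSum.trans hunion)
  refine ⟨milnorShift_injective hP, range_milnorShift hP, hsurj, fun Q i hi => ?_⟩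
  obtain ⟨n, rfl⟩ := Nat.exists_eq_add_of_le' hi
  have hS := ModuleCat.shortComplex_shortExact
    (ModuleCat.shortComplexOfCompEqZero _ _ (milnorSum_comp_milnorShift hP))
    (LinearMap.exact_iff.2 (range_milnorShift hP).symm) (milnorShift_injective hP) hsurj
  exact hS.isZero_ext_add_two R Q n
end

section
/- Let p be a prime number, let A be a perfect valuation ring of characteristic p (an integral domain of characteristic p with bijective Frobenius, in which any two elements are comparable under divisibility), and let d ∈ A be a nonzero nonunit. Let B be a nonzero commutative A-algebra such that: (i) B is torsionfree as an A-module (equivalently, flat over A); (ii) B is d-adically complete and separated, i.e., the canonical map B → lim_n B/dⁿB is an isomorphism; and (iii) in the quotient ring B/dB, for any two elements x, y, either x divides y or y divides x. Then B is a valuation ring, and the structure map A → B is injective, so that B is a valuation ring extension of A. -/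
/-- **Lemma 4.12** (flat lifts are valuation rings): let `A` be a perfect valuation ring of
characteristic `p`, `d ∈ A` a nonzero nonunit, and `B` a nonzero `A`-algebra which is
torsionfree over `A`, `d`-adically complete and separated, and such that any two elements of
`B/dB` are comparable under divisibility. Then `B` is a valuation ring and the structure map
`A → B` is injective, so `B` is a valuation ring extension of `A`. -/
theorem flat_adically_complete_lift_is_valuation_ring
    (p : ℕ) (hp : p.Prime) (A : Type) [CommRing A] [IsDomain A] [ValuationRing A]
    [CharP A p] (hperf : Function.Bijective (fun x : A => x ^ p))
    (d : A) (hd0 : d ≠ 0) (hdu : ¬ IsUnit d)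
    (B : Type) [CommRing B] [Nontrivial B] [Algebra A B]
    (htf : ∀ a : A, a ≠ 0 → Function.Injective fun b : B => a • b)
    (hcomplete : IsAdicComplete (Ideal.span {algebraMap A B d}) B)
    (hdiv : ∀ x y : B ⧸ Ideal.span {algebraMap A B d}, x ∣ y ∨ y ∣ x) :
    (IsDomain B ∧ ∀ x y : B, x ∣ y ∨ y ∣ x) ∧ Function.Injective (algebraMap A B) := by
  classical
  haveI := hcomplete
  set φ := algebraMap A B with hφ
  set D : B := φ d with hD
  set I : Ideal B := Ideal.span {D} with hI
  -- cancellation by nonzero elements of A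
  have hcancel : ∀ (a : A), a ≠ 0 → ∀ s t : B, φ a * s = φ a * t → s = t := by
    intro a ha s t h
    apply htf a ha
    simpa only [Algebra.smul_def] using h
  -- p-th root of d
  obtain ⟨d₁, hd₁⟩ := hperf.2 d
  simp only at hd₁
  have hd₁0 : d₁ ≠ 0 := by
    intro h
    apply hd0
    rw [← hd₁, h, zero_pow hp.ne_zero]
  set D₁ : B := φ d₁ with hD₁
  have hD₁p : D₁ ^ p = D := by rw [hD₁, ← map_pow, hd₁]
  have hp1 : p - 1 + 1 = p := Nat.succ_pred_eq_of_pos hp.pos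
  have hDfac : D = D₁ * D₁ ^ (p - 1) := by
    rw [← hD₁p]
    conv_lhs => rw [← hp1]
    ring
  -- units: 1 - D₁^(p-1) * τ is a unit
  have hjac : I ≤ (⊥ : Ideal B).jacobson := IsAdicComplete.le_jacobson_bot I
  have hunit : ∀ τ : B, IsUnit (1 - D₁ ^ (p - 1) * τ) := by
    intro τ
    set x : B := D₁ ^ (p - 1) * τ with hx
    have hxp : x ^ p ∈ I := by
      have hxe : x ^ p = D ^ (p - 1) * τ ^ p := by
        rw [hx, mul_pow, ← pow_mul, mul_comm (p - 1) p, pow_mul, hD₁p]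
      rw [hI, Ideal.mem_span_singleton, hxe]
      exact dvd_mul_of_dvd_left
        (dvd_pow_self D (by have := hp.two_le; omega : p - 1 ≠ 0)) _
    have h1 : IsUnit (1 - x ^ p) := by
      have := Ideal.mem_jacobson_bot.mp (hjac hxp) (-1)
      have he : x ^ p * (-1) + 1 = 1 - x ^ p := by ring
      rwa [he] at this
    have hdvd : (1 - x) ∣ (1 - x ^ p) := by
      have := sub_dvd_pow_sub_pow (1 : B) x p
      simpa using this
    exact isUnit_of_dvd_unit hdvd h1
  -- lifting divisibility mod D
  have hlift : ∀ x y : B, (Ideal.Quotient.mk I x ∣ Ideal.Quotient.mk I y) →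
      ∃ c t : B, y = x * c + D * t := by
    intro x y ⟨z, hz⟩
    obtain ⟨c, rfl⟩ := Ideal.Quotient.mk_surjective z
    have : y - x * c ∈ I := by
      rw [← Ideal.Quotient.eq_zero_iff_mem, map_sub, map_mul, hz, sub_self]
    rw [hI, Ideal.mem_span_singleton] at this
    obtain ⟨t, ht⟩ := this
    exact ⟨c, t, by linear_combination ht⟩
  -- key: if D₁ does not divide u then u divides D₁
  have hdivD₁ : ∀ u : B, ¬ D₁ ∣ u → u ∣ D₁ := by
    intro u hu
    rcases hdiv (Ideal.Quotient.mk I u) (Ideal.Quotient.mk I D₁) with h | h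
    · obtain ⟨c, t, ht⟩ := hlift u D₁ h
      have key : D₁ * (1 - D₁ ^ (p - 1) * t) = u * c := by
        rw [hDfac] at ht
        linear_combination ht
      obtain ⟨ν, hν⟩ := hunit t
      refine ⟨c * ↑ν⁻¹, ?_⟩
      calc D₁ = D₁ * (↑ν * ↑ν⁻¹) := by rw [ν.mul_inv]; ring
        _ = (D₁ * (1 - D₁ ^ (p - 1) * t)) * ↑ν⁻¹ := by rw [hν]; ring
        _ = u * (c * ↑ν⁻¹) := by rw [key]; ring
    · obtain ⟨c, t, ht⟩ := hlift D₁ u h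
      exact absurd ⟨c + D₁ ^ (p - 1) * t, by rw [ht, hDfac]; ring⟩ hu
  have huD : ∀ u : B, ¬ D₁ ∣ u → u ∣ D := by
    intro u hu
    exact dvd_trans (hdivD₁ u hu) ⟨D₁ ^ (p - 1), hDfac⟩
  -- separatedness
  have hhaus : ∀ x : B, (∀ n : ℕ, D ^ n ∣ x) → x = 0 := by
    intro x hx
    refine IsHausdorff.haus hcomplete.toIsHausdorff x (fun n => ?_)
    rw [SModEq.zero]
    have hmem : x ∈ I ^ n := by
      rw [hI, Ideal.span_singleton_pow, Ideal.mem_span_singleton]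
      exact hx n
    have := Submodule.smul_mem_smul hmem (Submodule.mem_top (x := (1 : B)))
    simpa using this
  -- normalization
  have hnorm : ∀ x : B, x ≠ 0 → ∃ (m : ℕ) (u : B), x = D₁ ^ m * u ∧ ¬ D₁ ∣ u := by
    intro x hx
    have hbdd : ∃ N, ¬ D₁ ^ N ∣ x := by
      by_contra h
      push_neg at h
      refine hx (hhaus x (fun n => ?_))
      have := h (p * n)
      rwa [pow_mul, hD₁p] at this
    set N := Nat.find hbdd with hN
    have hNs : ¬ D₁ ^ N ∣ x := Nat.find_spec hbdd
    have hN0 : N ≠ 0 := by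
      intro h
      rw [h, pow_zero] at hNs
      exact hNs (one_dvd x)
    have hm : D₁ ^ (N - 1) ∣ x := by
      by_contra h
      exact absurd (Nat.find_min hbdd (Nat.sub_lt (Nat.pos_of_ne_zero hN0) one_pos)) (by
        simpa using h)
    obtain ⟨u, hu⟩ := hm
    refine ⟨N - 1, u, hu, ?_⟩
    rintro ⟨v, rfl⟩
    apply hNs
    refine ⟨v, ?_⟩
    have hpow : D₁ ^ N = D₁ ^ (N - 1) * D₁ := by
      conv_lhs => rw [show N = N - 1 + 1 by omega]
      rw [pow_succ]
    rw [hu, hpow]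
    ring
  -- key comparability helper
  have hkey : ∀ (u w : B) (k : ℕ), ¬ D₁ ∣ u → ¬ D₁ ∣ w →
      (u ∣ D₁ ^ k * w ∨ (k = 0 ∧ w ∣ u)) := by
    intro u w k hu hw
    rcases hdiv (Ideal.Quotient.mk I u) (Ideal.Quotient.mk I (D₁ ^ k * w)) with h | h
    · obtain ⟨c, t, ht⟩ := hlift u (D₁ ^ k * w) h
      left
      rw [ht]
      exact dvd_add ⟨c, rfl⟩ (Dvd.dvd.mul_right (huD u hu) t)
    · obtain ⟨c, t, ht⟩ := hlift (D₁ ^ k * w) u h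
      cases k with
      | zero =>
        right
        refine ⟨rfl, ?_⟩
        rw [ht, pow_zero, one_mul]
        exact dvd_add ⟨c, rfl⟩ (Dvd.dvd.mul_right (huD w hw) t)
      | succ k' =>
        exfalso
        apply hu
        refine ⟨D₁ ^ k' * w * c + D₁ ^ (p - 1) * t, ?_⟩
        rw [ht, hDfac]
        ring
  -- total divisibility
  have htotal : ∀ x y : B, x ∣ y ∨ y ∣ x := by
    intro x y
    rcases eq_or_ne x 0 with rfl | hx
    · right; exact dvd_zero y
    rcases eq_or_ne y 0 with rfl | hy
    · left; exact dvd_zero x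
    obtain ⟨a, u, hxu, hu⟩ := hnorm x hx
    obtain ⟨b, w, hyw, hw⟩ := hnorm y hy
    rcases le_total a b with hab | hab
    · rcases hkey u w (b - a) hu hw with h | ⟨hk, h⟩
      · left
        rw [hxu, hyw, show b = a + (b - a) by omega, pow_add, mul_assoc]
        exact mul_dvd_mul_left _ h
      · right
        have hba : b = a := by omega
        rw [hxu, hyw, hba]
        exact mul_dvd_mul_left _ h
    · rcases hkey w u (a - b) hw hu with h | ⟨hk, h⟩
      · right
        rw [hxu, hyw, show a = b + (a - b) by omega, pow_add, mul_assoc]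
        exact mul_dvd_mul_left _ h
      · left
        have hba : a = b := by omega
        rw [hxu, hyw, hba]
        exact mul_dvd_mul_left _ h
  -- no zero divisors
  have hnzd : ∀ x y : B, x * y = 0 → x = 0 ∨ y = 0 := by
    intro x y hxy
    by_contra h
    push_neg at h
    obtain ⟨hx, hy⟩ := h
    obtain ⟨a, u, hxu, hu⟩ := hnorm x hx
    obtain ⟨σ, hσ⟩ := hdivD₁ u hu
    have h1 : φ (d₁ ^ a) * (u * y) = φ (d₁ ^ a) * 0 := by
      rw [map_pow, mul_zero, ← hD₁, ← hxy, hxu]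
      ring
    have h2 : u * y = 0 := hcancel (d₁ ^ a) (pow_ne_zero a hd₁0) _ _ h1
    have h3 : φ d₁ * y = φ d₁ * 0 := by
      rw [mul_zero, ← hD₁, hσ]
      calc u * σ * y = σ * (u * y) := by ring
        _ = 0 := by rw [h2, mul_zero]
    exact hy (hcancel d₁ hd₁0 y 0 h3)
  haveI : NoZeroDivisors B := ⟨fun {x y} h => hnzd x y h⟩
  have hinj : Function.Injective φ := by
    rw [injective_iff_map_eq_zero]
    intro a ha
    by_contra h0
    have h1 : (fun b : B => a • b) 1 = (fun b : B => a • b) 0 := by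
      simp only [Algebra.smul_def, smul_zero]
      rw [← hφ, ha]
      simp
    exact one_ne_zero (htf a h0 h1)
  exact ⟨⟨NoZeroDivisors.to_isDomain B, htotal⟩, hinj⟩
end
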